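/- For u > 0 and s ∈ ℂ with σ = Re s > 0, define φ(u,s) = (1/(4π)) ∫₀¹ [t(1−t)]^{s−1} (t+u)^{−s} dt. Then for each fixed such s: (i) φ(u,s) = −(1/(4π)) log u + O(1) as u → 0⁺, i.e. there exist C > 0 and δ > 0 such that |φ(u,s) + (1/(4π)) log u| ≤ C for all 0 < u < δ; and (ii) φ(u,s) = O(u^{−σ}) as u → ∞, i.e. there exist C > 0 and M > 0 such that |φ(u,s)| ≤ C u^{−σ} for all u ≥ M. -/

import Mathlib

open Real MeasureTheory intervalIntegral

/-- The integral kernel `φ(u,s) = (1/(4π)) ∫₀¹ [t(1-t)]^{s-1} (t+u)^{-s} dt` of the resolvent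
`(A₀ - s(1-s)I)⁻¹` of the hyperbolic Laplace operator on the upper half-plane, as a function of
the point-pair invariant `u`. -/
noncomputable def resolventKernelPhi (u : ℝ) (s : ℂ) : ℂ :=
  (1 / (4 * (π : ℂ))) *
    ∫ t in (0:ℝ)..1, ((t * (1 - t) : ℝ) : ℂ) ^ (s - 1) * (((t + u : ℝ)) : ℂ) ^ (-s)

/-!
On `(0,1)` put `a = t/(t+u)` and `k(b) = ((1-b)^{s-1} - 1)/b` (this is `oneSubCpowSlope (s - 1)`),
which is integrable on `(0,1)` when `Re s > 0`. Then
`[t(1-t)]^{s-1} (t+u)^{-s} = a^{s-1} a k(t) + (a^{s-1} - 1)/(t+u) + 1/(t+u)`.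
The first term is dominated by `|k|` because `|a^{s-1} a| = a^{Re s} ≤ 1`; the substitution
`b = u/(t+u)` turns the second into the integral of `k` over a subset of `(0,1)`; the third
integrates to `log ((1+u)/u)`. So `4π φ(u,s) + log u` is within `2 ∫₀¹ |k| + log (1+u)`.
For large `u`, `|(t+u)^{-s}| ≤ u^{-Re s}` leaves a convergent Beta integral.
-/

open Set

noncomputable def oneSubCpowSlope (w : ℂ) (b : ℝ) : ℂ := (((1 - b : ℝ) : ℂ) ^ w - 1) / b

lemma measurable_oneSubCpowSlope (w : ℂ) : Measurable (oneSubCpowSlope w) := by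
  unfold oneSubCpowSlope; fun_prop

lemma rpow_le_two_rpow_abs {x : ℝ} (hx : 1 / 2 ≤ x) (hx1 : x ≤ 1) (a : ℝ) : x ^ a ≤ 2 ^ |a| :=
  calc x ^ a ≤ x ^ (-|a|) := Real.rpow_le_rpow_of_exponent_ge (by linarith) hx1 (neg_abs_le a)
    _ ≤ (1 / 2) ^ (-|a|) := Real.rpow_le_rpow_of_nonpos (by norm_num) hx (by simp)
    _ = 2 ^ |a| := by
      rw [one_div, Real.inv_rpow (by norm_num), Real.rpow_neg (by norm_num), inv_inv]

lemma norm_ofReal_one_sub_cpow_sub_one_le (w : ℂ) {b : ℝ} (hb : b ∈ Icc (0 : ℝ) (1 / 2)) :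
    ‖((1 - b : ℝ) : ℂ) ^ w - 1‖ ≤ ‖w‖ * 2 ^ |w.re - 1| * b := by
  have hderiv : ∀ x ∈ Icc (0 : ℝ) (1 / 2), HasDerivWithinAt (fun y : ℝ => ((1 - y : ℝ) : ℂ) ^ w)
      (w * ((1 - x : ℝ) : ℂ) ^ (w - 1) * (-1)) (Icc 0 (1 / 2)) x := by
    intro x hx
    have hslit : (1 - (x : ℂ)) ∈ Complex.slitPlane := by
      rw [← Complex.ofReal_one, ← Complex.ofReal_sub]
      exact Complex.ofReal_mem_slitPlane.2 (by linarith [hx.2])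
    have := (((hasDerivAt_id (x : ℂ)).const_sub 1).cpow_const (c := w) hslit).comp_ofReal
    push_cast
    exact this.hasDerivWithinAt
  have hbound : ∀ x ∈ Icc (0 : ℝ) (1 / 2),
      ‖w * ((1 - x : ℝ) : ℂ) ^ (w - 1) * (-1)‖ ≤ ‖w‖ * 2 ^ |w.re - 1| := by
    intro x hx
    rw [norm_mul, norm_neg, norm_one, mul_one, norm_mul,
      Complex.norm_cpow_eq_rpow_re_of_pos (by linarith [hx.2]), Complex.sub_re, Complex.one_re]
    gcongr
    exact rpow_le_two_rpow_abs (by linarith [hx.2]) (by linarith [hx.1]) _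
  have := (convex_Icc (0 : ℝ) (1 / 2)).norm_image_sub_le_of_norm_hasDerivWithin_le hderiv hbound
    ⟨le_rfl, by norm_num⟩ hb
  simpa [abs_of_nonneg hb.1] using this

lemma integrableOn_oneSubCpowSlope {w : ℂ} (hw : -1 < w.re) :
    IntegrableOn (oneSubCpowSlope w) (Ioo 0 1) := by
  have hleft : IntegrableOn (oneSubCpowSlope w) (Ioc 0 (1 / 2)) := by
    refine Measure.integrableOn_of_bounded (M := ‖w‖ * 2 ^ |w.re - 1|) (by simp)
      (measurable_oneSubCpowSlope w).aestronglyMeasurable ?_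
    filter_upwards [ae_restrict_mem measurableSet_Ioc] with b hb
    rw [oneSubCpowSlope, norm_div, Complex.norm_real, Real.norm_of_nonneg hb.1.le,
      div_le_iff₀ hb.1]
    exact norm_ofReal_one_sub_cpow_sub_one_le w (Ioc_subset_Icc_self hb)
  have hright : IntegrableOn (oneSubCpowSlope w) (Ioo (1 / 2) 1) := by
    have hpow : IntegrableOn (fun b : ℝ => (1 - b) ^ w.re) (Ioo (1 / 2) 1) := by
      have := ((intervalIntegrable_rpow' hw (a := 0) (b := 1 / 2)).comp_sub_left 1).symm
      rw [sub_zero, show (1 : ℝ) - 1 / 2 = 1 / 2 by norm_num] at this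
      exact (intervalIntegrable_iff_integrableOn_Ioo_of_le (by norm_num)).1 this
    have hone : IntegrableOn (fun _ : ℝ => (1 : ℝ)) (Ioo (1 / 2) 1) :=
      integrableOn_const measure_Ioo_lt_top.ne
    refine ((hpow.add hone).const_mul 2).mono'
      (measurable_oneSubCpowSlope w).aestronglyMeasurable ?_
    filter_upwards [ae_restrict_mem measurableSet_Ioo] with b hb
    have hb0 : 0 < b := by linarith [hb.1]
    rw [oneSubCpowSlope, norm_div, Complex.norm_real, Real.norm_of_nonneg hb0.le,
      div_le_iff₀ hb0]
    calc ‖((1 - b : ℝ) : ℂ) ^ w - 1‖ ≤ (1 - b) ^ w.re + 1 := by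
          refine (norm_sub_le _ _).trans ?_
          rw [Complex.norm_cpow_eq_rpow_re_of_pos (by linarith [hb.2]), norm_one]
      _ ≤ 2 * ((1 - b) ^ w.re + 1) * b := by
          nlinarith [hb.1, Real.rpow_nonneg (by linarith [hb.2] : (0 : ℝ) ≤ 1 - b) w.re]
  rw [← Ioc_union_Ioo_eq_Ioo (by norm_num : (0 : ℝ) ≤ 1 / 2) (by norm_num)]
  exact hleft.union hright

lemma hasDerivAt_div_add {u t : ℝ} (h : t + u ≠ 0) :
    HasDerivAt (fun x => u / (x + u)) (-(u / (t + u) ^ 2)) t := by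
  have := (((hasDerivAt_id' t).add_const u).inv h).const_mul u
  simpa [div_eq_mul_inv, neg_div] using this

lemma injective_div_add {u : ℝ} (hu : u ≠ 0) : Function.Injective fun x : ℝ => u / (x + u) := by
  intro x y h
  simpa only [div_eq_mul_inv, mul_right_inj' hu, inv_inj, add_left_inj] using h

lemma div_add_mem_Ioo {t u : ℝ} (ht : 0 < t) (hu : 0 < u) : u / (t + u) ∈ Ioo 0 1 :=
  ⟨by positivity, (div_lt_one (by linarith)).2 (by linarith)⟩

lemma abs_deriv_smul_oneSubCpowSlope (w : ℂ) {t u : ℝ} (ht : 0 < t) (hu : 0 < u) :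
    |-(u / (t + u) ^ 2)| • oneSubCpowSlope w (u / (t + u)) =
      (((t / (t + u) : ℝ) : ℂ) ^ w - 1) / ((t + u : ℝ) : ℂ) := by
  have htu : 0 < t + u := by linarith
  have hsub : 1 - u / (t + u) = t / (t + u) := by field_simp; ring
  rw [oneSubCpowSlope, hsub, abs_neg, abs_of_pos (by positivity), Complex.real_smul]
  generalize ((t / (t + u) : ℝ) : ℂ) ^ w = X
  have : (t : ℂ) + u ≠ 0 := by exact_mod_cast htu.ne'
  have : (u : ℂ) ≠ 0 := by exact_mod_cast hu.ne'
  push_cast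
  field_simp

lemma integrableOn_cpow_div_add_sub_one_div {w : ℂ} (hw : -1 < w.re) {u : ℝ} (hu : 0 < u) :
    IntegrableOn (fun t : ℝ => (((t / (t + u) : ℝ) : ℂ) ^ w - 1) / ((t + u : ℝ) : ℂ))
      (Ioo 0 1) := by
  have himage : (fun t => u / (t + u)) '' Ioo 0 1 ⊆ Ioo 0 1 :=
    image_subset_iff.2 fun t ht => div_add_mem_Ioo ht.1 hu
  have := ((integrableOn_image_iff_integrableOn_abs_deriv_smul measurableSet_Ioo
    (fun t ht => (hasDerivAt_div_add (by linarith [ht.1])).hasDerivWithinAt)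
    (injective_div_add hu.ne').injOn _).1 ((integrableOn_oneSubCpowSlope hw).mono_set himage))
  exact this.congr_fun (fun t ht => abs_deriv_smul_oneSubCpowSlope w ht.1 hu) measurableSet_Ioo

lemma norm_setIntegral_cpow_div_add_sub_one_div_le {w : ℂ} (hw : -1 < w.re) {u : ℝ}
    (hu : 0 < u) :
    ‖∫ t in Ioo (0 : ℝ) 1, (((t / (t + u) : ℝ) : ℂ) ^ w - 1) / ((t + u : ℝ) : ℂ)‖ ≤
      ∫ b in Ioo (0 : ℝ) 1, ‖oneSubCpowSlope w b‖ := by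
  have himage : (fun t => u / (t + u)) '' Ioo 0 1 ⊆ Ioo 0 1 :=
    image_subset_iff.2 fun t ht => div_add_mem_Ioo ht.1 hu
  rw [← setIntegral_congr_fun measurableSet_Ioo
      (fun t ht => abs_deriv_smul_oneSubCpowSlope w ht.1 hu),
    ← integral_image_eq_integral_abs_deriv_smul measurableSet_Ioo
      (fun t ht => (hasDerivAt_div_add (by linarith [ht.1])).hasDerivWithinAt)
      (injective_div_add hu.ne').injOn]
  exact (MeasureTheory.norm_integral_le_integral_norm _).trans (setIntegral_mono_set
    (integrableOn_oneSubCpowSlope hw).norm (.of_forall fun _ => norm_nonneg _)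
    himage.eventuallyLE)

lemma kernel_integrand_eq (s : ℂ) {t u : ℝ} (ht : 0 < t) (ht1 : t ≤ 1) (hu : 0 ≤ u) :
    ((t * (1 - t) : ℝ) : ℂ) ^ (s - 1) * ((t + u : ℝ) : ℂ) ^ (-s) =
      ((t / (t + u) : ℝ) : ℂ) ^ (s - 1) * ((t / (t + u) : ℝ) : ℂ) * oneSubCpowSlope (s - 1) t
      + (((t / (t + u) : ℝ) : ℂ) ^ (s - 1) - 1) / ((t + u : ℝ) : ℂ)
      + ((t + u : ℝ) : ℂ)⁻¹ := by
  have htu : 0 < t + u := by linarith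
  have hsplit : t * (1 - t) = t / (t + u) * (1 - t) * (t + u) := by field_simp
  have hpow : ((t + u : ℝ) : ℂ) ^ (s - 1) * ((t + u : ℝ) : ℂ) ^ (-s) = ((t + u : ℝ) : ℂ)⁻¹ := by
    rw [← Complex.cpow_add _ _ (by exact_mod_cast htu.ne'), show s - 1 + -s = -1 by ring,
      Complex.cpow_neg_one]
  rw [hsplit, Complex.ofReal_mul, Complex.mul_cpow_ofReal_nonneg (by positivity) htu.le,
    Complex.ofReal_mul, Complex.mul_cpow_ofReal_nonneg (by positivity) (by linarith),
    mul_assoc, hpow, oneSubCpowSlope]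
  generalize ((t / (t + u) : ℝ) : ℂ) ^ (s - 1) = A
  generalize ((1 - t : ℝ) : ℂ) ^ (s - 1) = B
  have h1 : (t : ℂ) + u ≠ 0 := by exact_mod_cast htu.ne'
  have h2 : (t : ℂ) ≠ 0 := by exact_mod_cast ht.ne'
  push_cast
  field_simp
  ring

lemma norm_ofReal_cpow_sub_one_mul_self_le_one {a : ℝ} (ha : 0 < a) (ha1 : a ≤ 1) {z : ℂ}
    (hz : 0 ≤ z.re) : ‖(a : ℂ) ^ (z - 1) * a‖ ≤ 1 := by
  rw [norm_mul, Complex.norm_cpow_eq_rpow_re_of_pos ha, Complex.norm_real,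
    Real.norm_of_nonneg ha.le, Complex.sub_re, Complex.one_re, Real.rpow_sub_one ha.ne',
    div_mul_cancel₀ _ ha.ne']
  exact Real.rpow_le_one ha.le ha1 hz

lemma setIntegral_ofReal_add_inv {u : ℝ} (hu : 0 < u) :
    ∫ t in Ioo (0 : ℝ) 1, ((t + u : ℝ) : ℂ)⁻¹ = (Real.log ((1 + u) / u) : ℂ) := by
  rw [← integral_Ioc_eq_integral_Ioo, ← intervalIntegral.integral_of_le zero_le_one]
  simp_rw [← Complex.ofReal_inv]
  rw [intervalIntegral.integral_ofReal, intervalIntegral.integral_comp_add_right (fun x => x⁻¹),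
    integral_inv_of_pos (by linarith) (by linarith), zero_add, add_comm]

lemma norm_div_add_cpow_mul_oneSubCpowSlope_le {s : ℂ} (hs : 0 ≤ s.re) {t u : ℝ} (ht : 0 < t)
    (hu : 0 ≤ u) :
    ‖((t / (t + u) : ℝ) : ℂ) ^ (s - 1) * ((t / (t + u) : ℝ) : ℂ) * oneSubCpowSlope (s - 1) t‖ ≤
      ‖oneSubCpowSlope (s - 1) t‖ := by
  rw [norm_mul]
  exact mul_le_of_le_one_left (norm_nonneg _) (norm_ofReal_cpow_sub_one_mul_self_le_one
    (by positivity) ((div_le_one (by linarith)).2 (by linarith)) hs)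

lemma setIntegral_kernel_eq {s : ℂ} (hs : 0 < s.re) {u : ℝ} (hu : 0 < u) :
    ∫ t in Ioo (0 : ℝ) 1, ((t * (1 - t) : ℝ) : ℂ) ^ (s - 1) * ((t + u : ℝ) : ℂ) ^ (-s) =
      (∫ t in Ioo (0 : ℝ) 1, ((t / (t + u) : ℝ) : ℂ) ^ (s - 1) * ((t / (t + u) : ℝ) : ℂ) *
          oneSubCpowSlope (s - 1) t)
      + (∫ t in Ioo (0 : ℝ) 1, (((t / (t + u) : ℝ) : ℂ) ^ (s - 1) - 1) / ((t + u : ℝ) : ℂ))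
      + (Real.log ((1 + u) / u) : ℂ) := by
  have hw : -1 < (s - 1).re := by rw [Complex.sub_re, Complex.one_re]; linarith
  have hT : IntegrableOn (fun t : ℝ => ((t / (t + u) : ℝ) : ℂ) ^ (s - 1) *
      ((t / (t + u) : ℝ) : ℂ) * oneSubCpowSlope (s - 1) t) (Ioo 0 1) := by
    refine (integrableOn_oneSubCpowSlope hw).norm.mono'
      (by have := measurable_oneSubCpowSlope (s - 1); fun_prop) ?_
    filter_upwards [ae_restrict_mem measurableSet_Ioo] with t ht
    exact norm_div_add_cpow_mul_oneSubCpowSlope_le hs.le ht.1 hu.le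
  have hinv : IntegrableOn (fun t : ℝ => ((t + u : ℝ) : ℂ)⁻¹) (Ioo 0 1) :=
    ((by fun_prop : Continuous fun t : ℝ => ((t + u : ℝ) : ℂ)).continuousOn.inv₀
      fun t ht => Complex.ofReal_ne_zero.2 (by linarith [ht.1])).integrableOn_Icc.mono_set
        Ioo_subset_Icc_self
  rw [← setIntegral_ofReal_add_inv hu, setIntegral_congr_fun measurableSet_Ioo
      (fun t ht => kernel_integrand_eq s ht.1 ht.2.le hu.le), integral_add _ hinv,
    integral_add hT (integrableOn_cpow_div_add_sub_one_div hw hu)]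
  exact hT.add (integrableOn_cpow_div_add_sub_one_div hw hu)

lemma norm_setIntegral_kernel_add_log_le {s : ℂ} (hs : 0 < s.re) {u : ℝ} (hu : 0 < u) :
    ‖(∫ t in Ioo (0 : ℝ) 1, ((t * (1 - t) : ℝ) : ℂ) ^ (s - 1) * ((t + u : ℝ) : ℂ) ^ (-s))
        + (Real.log u : ℂ)‖ ≤
      2 * (∫ b in Ioo (0 : ℝ) 1, ‖oneSubCpowSlope (s - 1) b‖) + Real.log (1 + u) := by
  have hw : -1 < (s - 1).re := by rw [Complex.sub_re, Complex.one_re]; linarith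
  rw [setIntegral_kernel_eq hs hu, Real.log_div (by linarith) hu.ne', Complex.ofReal_sub,
    ← add_sub_assoc, sub_add_cancel, two_mul]
  refine norm_add₃_le.trans ?_
  gcongr
  · refine norm_integral_le_of_norm_le (integrableOn_oneSubCpowSlope hw).norm ?_
    filter_upwards [ae_restrict_mem measurableSet_Ioo] with t ht
    exact norm_div_add_cpow_mul_oneSubCpowSlope_le hs.le ht.1 hu.le
  · exact norm_setIntegral_cpow_div_add_sub_one_div_le hw hu
  · rw [Complex.norm_real, Real.norm_of_nonneg (Real.log_nonneg (by linarith))]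

lemma integrableOn_ofReal_mul_one_sub_cpow {s : ℂ} (hs : 0 < s.re) :
    IntegrableOn (fun t : ℝ => ((t * (1 - t) : ℝ) : ℂ) ^ (s - 1)) (Ioo 0 1) := by
  refine ((intervalIntegrable_iff_integrableOn_Ioo_of_le zero_le_one).1
    (Complex.betaIntegral_convergent hs hs)).congr_fun (fun t ht => ?_) measurableSet_Ioo
  rw [Complex.ofReal_mul, Complex.mul_cpow_ofReal_nonneg ht.1.le (by linarith [ht.2]),
    Complex.ofReal_sub, Complex.ofReal_one]

lemma norm_setIntegral_kernel_le {s : ℂ} (hs : 0 < s.re) {u : ℝ} (hu : 0 < u) :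
    ‖∫ t in Ioo (0 : ℝ) 1, ((t * (1 - t) : ℝ) : ℂ) ^ (s - 1) * ((t + u : ℝ) : ℂ) ^ (-s)‖ ≤
      u ^ (-s.re) * ∫ t in Ioo (0 : ℝ) 1, ‖((t * (1 - t) : ℝ) : ℂ) ^ (s - 1)‖ := by
  rw [← MeasureTheory.integral_const_mul]
  refine norm_integral_le_of_norm_le
    ((integrableOn_ofReal_mul_one_sub_cpow hs).norm.const_mul _) ?_
  filter_upwards [ae_restrict_mem measurableSet_Ioo] with t ht
  rw [norm_mul, mul_comm, Complex.norm_cpow_eq_rpow_re_of_pos (by linarith [ht.1]),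
    Complex.neg_re]
  exact mul_le_mul_of_nonneg_right
    (Real.rpow_le_rpow_of_nonpos hu (by linarith [ht.1]) (by linarith)) (norm_nonneg _)

lemma resolventKernelPhi_eq (u : ℝ) (s : ℂ) :
    resolventKernelPhi u s = (1 / (4 * π) : ℂ) *
      ∫ t in Ioo (0 : ℝ) 1, ((t * (1 - t) : ℝ) : ℂ) ^ (s - 1) * ((t + u : ℝ) : ℂ) ^ (-s) := by
  rw [resolventKernelPhi, intervalIntegral.integral_of_le zero_le_one,
    integral_Ioc_eq_integral_Ioo]

lemma norm_one_div_four_pi_mul (z : ℂ) : ‖(1 / (4 * π) : ℂ) * z‖ = ‖z‖ / (4 * π) := by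
  rw [norm_mul, one_div, norm_inv, norm_mul, Complex.norm_real, Real.norm_of_nonneg pi_pos.le]
  simp [div_eq_inv_mul]

theorem resolvent_kernel_asymptotics (s : ℂ) (hs : 0 < s.re) :
    (∃ C : ℝ, 0 < C ∧ ∃ δ : ℝ, 0 < δ ∧ ∀ u : ℝ, 0 < u → u < δ →
      ‖resolventKernelPhi u s + (((1 / (4 * π)) * Real.log u : ℝ) : ℂ)‖ ≤ C) ∧
    (∃ C : ℝ, 0 < C ∧ ∃ M : ℝ, 0 < M ∧ ∀ u : ℝ, M ≤ u →
      ‖resolventKernelPhi u s‖ ≤ C * u ^ (-s.re)) := by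
  set J := ∫ b in Ioo (0 : ℝ) 1, ‖oneSubCpowSlope (s - 1) b‖
  set B := ∫ t in Ioo (0 : ℝ) 1, ‖((t * (1 - t) : ℝ) : ℂ) ^ (s - 1)‖
  have hJ : 0 ≤ J := integral_nonneg fun _ => norm_nonneg _
  have hB : 0 ≤ B := integral_nonneg fun _ => norm_nonneg _
  refine ⟨⟨(2 * J + 1) / (4 * π), by positivity, 1, one_pos, fun u hu hu1 => ?_⟩,
    ⟨(B + 1) / (4 * π), by positivity, 1, one_pos, fun u hu => ?_⟩⟩
  · have hlog : Real.log (1 + u) ≤ 1 := by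
      linarith [Real.log_le_sub_one_of_pos (by linarith : 0 < 1 + u)]
    rw [resolventKernelPhi_eq, show (((1 / (4 * π)) * Real.log u : ℝ) : ℂ) =
      (1 / (4 * π) : ℂ) * Real.log u by push_cast; ring, ← mul_add, norm_one_div_four_pi_mul]
    gcongr
    linarith [norm_setIntegral_kernel_add_log_le hs hu]
  · have hu0 : 0 < u := by linarith
    rw [resolventKernelPhi_eq, norm_one_div_four_pi_mul, div_mul_eq_mul_div]
    gcongr
    calc _ ≤ u ^ (-s.re) * B := norm_setIntegral_kernel_le hs hu0
      _ ≤ (B + 1) * u ^ (-s.re) := by nlinarith [Real.rpow_pos_of_pos hu0 (-s.re)]
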